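/- Let P ⊆ ℝⁿ be a convex polyhedron, written as an intersection of closed half-spaces H₁ ∩ ⋯ ∩ H_l, and let P₁ = P, P₂ = closure((H₂ ∩ ⋯ ∩ H_l) \ P). Then P₁ and P₂ are convex, P₁ ∪ P₂ = H₂ ∩ ⋯ ∩ H_l is convex, and any segment in P₁ ∪ P₂ is a concatenation of at most one segment in P₁ and at most one segment in P₂. -/

import Mathlib

/-!
Write `H₁ = {ℓ ≤ c}`, so that `P = Q ∩ {ℓ ≤ c}` and `Q \ P = Q ∩ {c < ℓ}`; both are convex, and
`P₂` is the closure of the latter. Given `x ∈ P` and `y ∈ P₂` with `c < ℓ y`, the affine function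
`ℓ` takes the value `c` at some `z ∈ [x, y]`. Then `[x, z] ⊆ P` by convexity, while `ℓ > c` on the
open segment `(z, y)`, so `[z, y] = closure (z, y) ⊆ P₂`.
-/

/-- `H` is a closed half-space of `E` determined by a nonzero linear functional. -/
def IsClosedHalfspace {E : Type*} [NormedAddCommGroup E] [NormedSpace ℝ E]
    (H : Set E) : Prop :=
  ∃ (ℓ : E →ₗ[ℝ] ℝ) (c : ℝ), ℓ ≠ 0 ∧ H = {x | ℓ x ≤ c}

open Set

theorem IsClosedHalfspace.convex {E : Type*} [NormedAddCommGroup E] [NormedSpace ℝ E]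
    {H : Set E} (hH : IsClosedHalfspace H) : Convex ℝ H := by
  obtain ⟨ℓ, c, -, rfl⟩ := hH
  exact convex_halfSpace_le ℓ.isLinear c

theorem IsClosedHalfspace.isClosed {E : Type*} [NormedAddCommGroup E] [NormedSpace ℝ E]
    [FiniteDimensional ℝ E] {H : Set E} (hH : IsClosedHalfspace H) : IsClosed H := by
  obtain ⟨ℓ, c, -, rfl⟩ := hH
  exact isClosed_le ℓ.continuous_of_finiteDimensional continuous_const

theorem union_closure_diff_eq_of_subset {X : Type*} [TopologicalSpace X] {A Q : Set X}
    (hAQ : A ⊆ Q) (hQ : IsClosed Q) : A ∪ closure (Q \ A) = Q :=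
  (union_subset hAQ (hQ.closure_subset_iff.mpr sdiff_subset)).antisymm fun x hx =>
    (em (x ∈ A)).imp id fun hxA => subset_closure ⟨hx, hxA⟩

section HalfspaceCut

variable {E : Type*} [AddCommGroup E] [Module ℝ E] {Q : Set E} (ℓ : E →ₗ[ℝ] ℝ) (c : ℝ)

theorem diff_inter_setOf_le : Q \ (Q ∩ {x | ℓ x ≤ c}) = Q ∩ {x | c < ℓ x} := by
  ext x
  simp [not_le]

theorem exists_mem_segment_apply_eq {x y : E} (hc : c ∈ Icc (ℓ x) (ℓ y)) :
    ∃ z ∈ segment ℝ x y, ℓ z = c := by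
  have hc' : c ∈ ℓ.toAffineMap '' segment ℝ x y := by
    rwa [image_segment, LinearMap.coe_toAffineMap, segment_eq_Icc (hc.1.trans hc.2)]
  simpa using hc'

theorem openSegment_subset_setOf_lt {z y : E} (hz : ℓ z = c) (hy : c < ℓ y) :
    openSegment ℝ z y ⊆ {w | c < ℓ w} := fun w hw => by
  have : ℓ w ∈ openSegment ℝ (ℓ z) (ℓ y) :=
    image_openSegment ℝ ℓ.toAffineMap z y ▸ mem_image_of_mem ℓ.toAffineMap hw
  rw [openSegment_eq_Ioo (hz ▸ hy), hz] at this
  exact this.1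

variable [TopologicalSpace E]

theorem closure_inter_setOf_lt_subset (hQ : IsClosed Q) (hℓ : Continuous ℓ) :
    closure (Q ∩ {x | c < ℓ x}) ⊆ Q ∩ {x | c ≤ ℓ x} :=
  closure_minimal (inter_subset_inter_right Q fun _ (h : c < ℓ _) => h.le)
    (hQ.inter (isClosed_le continuous_const hℓ))

variable [ContinuousAdd E] [ContinuousSMul ℝ E]

theorem exists_segment_split_halfspace (hQc : Convex ℝ Q) (hQ : IsClosed Q)
    {x y : E} (hx : x ∈ Q ∩ {x | ℓ x ≤ c}) (hy : y ∈ closure (Q ∩ {x | c < ℓ x})) :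
    ∃ z ∈ segment ℝ x y,
      segment ℝ x z ⊆ Q ∩ {x | ℓ x ≤ c} ∧ segment ℝ z y ⊆ closure (Q ∩ {x | c < ℓ x}) := by
  have hcut : Convex ℝ (Q ∩ {x | ℓ x ≤ c}) := hQc.inter (convex_halfSpace_le ℓ.isLinear c)
  have hyQ : y ∈ Q := hQ.closure_subset_iff.mpr inter_subset_left hy
  rcases le_or_gt (ℓ y) c with hyc | hyc
  · refine ⟨y, right_mem_segment ℝ x y, hcut.segment_subset hx ⟨hyQ, hyc⟩, ?_⟩
    rwa [segment_same, singleton_subset_iff]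
  obtain ⟨z, hz, hℓz⟩ := exists_mem_segment_apply_eq ℓ c ⟨hx.2, hyc.le⟩
  have hzQ : z ∈ Q := hQc.segment_subset hx.1 hyQ hz
  refine ⟨z, hz, hcut.segment_subset hx ⟨hzQ, hℓz.le⟩, ?_⟩
  have hopen : openSegment ℝ z y ⊆ Q ∩ {x | c < ℓ x} :=
    subset_inter (hQc.openSegment_subset hzQ hyQ) (openSegment_subset_setOf_lt ℓ c hℓz hyc)
  exact segment_subset_closure_openSegment.trans (closure_mono hopen)

end HalfspaceCut

theorem stmt_4_general {n l : ℕ} (hl : 1 ≤ l)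
    (H : Fin l → Set (EuclideanSpace ℝ (Fin n)))
    (hH : ∀ i, IsClosedHalfspace (H i))
    (P Q P₁ P₂ : Set (EuclideanSpace ℝ (Fin n)))
    (hP : P = ⋂ i, H i)
    (hQ : Q = ⋂ i ∈ {i : Fin l | i ≠ ⟨0, hl⟩}, H i)
    (hP₁ : P₁ = P) (hP₂ : P₂ = closure (Q \ P)) :
    Convex ℝ P₁ ∧ Convex ℝ P₂ ∧ P₁ ∪ P₂ = Q ∧ Convex ℝ (P₁ ∪ P₂) ∧
      ∀ x ∈ P₁, ∀ y ∈ P₂, ∃ z ∈ segment ℝ x y,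
        segment ℝ x z ⊆ P₁ ∧ segment ℝ z y ⊆ P₂ := by
  obtain ⟨ℓ, c, -, hH₀⟩ := hH ⟨0, hl⟩
  have hQconv : Convex ℝ Q := hQ ▸ convex_iInter₂ fun i _ => (hH i).convex
  have hQclosed : IsClosed Q := hQ ▸ isClosed_biInter fun i _ => (hH i).isClosed
  have hPQ : P = Q ∩ {x | ℓ x ≤ c} := by
    rw [hP, hQ, ← hH₀, inter_comm]
    exact iInf_split_single H ⟨0, hl⟩
  have hunion : P₁ ∪ P₂ = Q := by
    rw [hP₁, hP₂]
    exact union_closure_diff_eq_of_subset (hPQ ▸ inter_subset_left) hQclosed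
  rw [hPQ, diff_inter_setOf_le] at hP₂
  subst hP₁ hP₂ hPQ
  refine ⟨hQconv.inter (convex_halfSpace_le ℓ.isLinear c),
    (hQconv.inter (convex_halfSpace_gt ℓ.isLinear c)).closure, hunion, hunion.symm ▸ hQconv,
    fun x hx y hy => exists_segment_split_halfspace ℓ c hQconv hQclosed hx hy⟩

theorem stmt_4 {n l : ℕ} (hl : 1 ≤ l)
    (H : Fin l → Set (EuclideanSpace ℝ (Fin n)))
    (hH : ∀ i, IsClosedHalfspace (H i))
    (P Q P₁ P₂ : Set (EuclideanSpace ℝ (Fin n)))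
    (hP : P = ⋂ i, H i) (hPne : P.Nonempty)
    (hQ : Q = ⋂ i ∈ {i : Fin l | i ≠ ⟨0, hl⟩}, H i)
    (hP₁ : P₁ = P) (hP₂ : P₂ = closure (Q \ P)) :
    Convex ℝ P₁ ∧ Convex ℝ P₂ ∧ P₁ ∪ P₂ = Q ∧ Convex ℝ (P₁ ∪ P₂) ∧
      ∀ x ∈ P₁, ∀ y ∈ P₂, ∃ z ∈ segment ℝ x y,
        segment ℝ x z ⊆ P₁ ∧ segment ℝ z y ⊆ P₂ :=
  stmt_4_general hl H hH P Q P₁ P₂ hP hQ hP₁ hP₂
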